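/- arXiv:2512.15164 — 3 statements merged into one kernel-verified Lean document; each statement's English description precedes it below -/
import Mathlib

section
/- Let γ : ℝ^d → [0, ∞) be a nonnegative, convex, Lipschitz continuous function, let ε₀ ≥ 0, and let (εₙ)ₙ ⊂ [0, ∞) be a sequence with εₙ → ε₀. Then the functions γ_{εₙ} converge to γ_{ε₀} on ℝ^d in the sense of Mosco, namely: (M1) for every w ∈ ℝ^d one has γ_{εₙ}(w) → γ_{ε₀}(w) as n → ∞ (so constant sequences are recovery sequences); and (M2) for every w ∈ ℝ^d and every sequence (wₙ)ₙ ⊂ ℝ^d with wₙ → w, one has liminf_{n→∞} γ_{εₙ}(wₙ) ≥ γ_{ε₀}(w). -/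
open Filter MeasureTheory

/-- The mollification `γ_ε := ρ_ε * γ`, with `γ_0 := γ`, where
`ρ_ε(x) = ε^{-d} ρ(x/ε)`. -/
noncomputable def mollify {d : ℕ} (ρ γ : EuclideanSpace ℝ (Fin d) → ℝ) (ε : ℝ)
    (x : EuclideanSpace ℝ (Fin d)) : ℝ :=
  if ε = 0 then γ x else ∫ y, (ε ^ d)⁻¹ * ρ (ε⁻¹ • y) * γ (x - y)

/-- If `γ : ℝ^d → [0, ∞)` is nonnegative, convex and Lipschitz, `ε₀ ≥ 0`, and
`εₙ → ε₀` with `εₙ ≥ 0`, then `γ_{εₙ} → γ_{ε₀}` on `ℝ^d` in the sense of Mosco: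
(M1) `γ_{εₙ}(w) → γ_{ε₀}(w)` for every `w`, and (M2) for every `w` and every sequence
`wₙ → w` one has `liminf_n γ_{εₙ}(wₙ) ≥ γ_{ε₀}(w)` (liminf in the extended reals). -/
theorem mollify_mosco_convergence {d : ℕ} (hd : 1 ≤ d)
    (ρ : EuclideanSpace ℝ (Fin d) → ℝ)
    (hρ_smooth : ContDiff ℝ (⊤ : ℕ∞) ρ) (hρ_cpt : HasCompactSupport ρ)
    (hρ_nonneg : ∀ x, 0 ≤ ρ x)
    (hρ_supp : Function.support ρ ⊆ Metric.closedBall 0 1)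
    (hρ_int : ∫ x, ρ x = 1)
    (γ : EuclideanSpace ℝ (Fin d) → ℝ)
    (hγ_nonneg : ∀ x, 0 ≤ γ x)
    (hγ_convex : ConvexOn ℝ Set.univ γ)
    (L : ℝ) (hL : 0 ≤ L) (hγ_lip : LipschitzWith (Real.toNNReal L) γ)
    (ε₀ : ℝ) (hε₀ : 0 ≤ ε₀)
    (εseq : ℕ → ℝ) (hεseq_nonneg : ∀ n, 0 ≤ εseq n)
    (hεseq_conv : Filter.Tendsto εseq Filter.atTop (nhds ε₀)) :
    (∀ w, Filter.Tendsto (fun n => mollify ρ γ (εseq n) w) Filter.atTop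
        (nhds (mollify ρ γ ε₀ w))) ∧
    (∀ w : EuclideanSpace ℝ (Fin d), ∀ wseq : ℕ → EuclideanSpace ℝ (Fin d),
      Filter.Tendsto wseq Filter.atTop (nhds w) →
      ((mollify ρ γ ε₀ w : ℝ) : EReal) ≤
        Filter.liminf (fun n => ((mollify ρ γ (εseq n) (wseq n) : ℝ) : EReal))
          Filter.atTop) := by
  have hρ_cont : Continuous ρ := hρ_smooth.continuous
  have hγ_cont : Continuous γ := hγ_lip.continuous
  set g : ℝ → EuclideanSpace ℝ (Fin d) → ℝ := fun ε x => ∫ z, ρ z * γ (x - ε • z) with hg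
  -- integrability
  have hint : ∀ (ε : ℝ) (x : EuclideanSpace ℝ (Fin d)), Integrable (fun z => ρ z * γ (x - ε • z)) := by
    intro ε x
    apply Continuous.integrable_of_hasCompactSupport
    · exact hρ_cont.mul (hγ_cont.comp (continuous_const.sub (continuous_const_smul ε)))
    · exact hρ_cpt.mul_right
  -- mollify = g for nonneg ε
  have hkey : ∀ (ε : ℝ), 0 ≤ ε → ∀ x : EuclideanSpace ℝ (Fin d), mollify ρ γ ε x = g ε x := by
    intro ε hε x
    rcases eq_or_lt_of_le hε with h0 | hpos
    · subst h0
      simp only [mollify, if_pos rfl, hg, if_true, zero_smul, sub_zero]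
      rw [integral_mul_const, hρ_int, one_mul]
    · have hεne : ε ≠ 0 := ne_of_gt hpos
      simp only [mollify, if_neg hεne, hg]
      have hcs : ∀ z : EuclideanSpace ℝ (Fin d), (fun y : EuclideanSpace ℝ (Fin d) => ρ (ε⁻¹ • y) * γ (x - y)) (ε • z)
          = ρ z * γ (x - ε • z) := by
        intro z
        simp [smul_smul, inv_mul_cancel₀ hεne]
      calc ∫ y, (ε ^ d)⁻¹ * ρ (ε⁻¹ • y) * γ (x - y)
          = (ε ^ d)⁻¹ • ∫ y, ρ (ε⁻¹ • y) * γ (x - y) := by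
            rw [← integral_smul]
            congr 1; ext y; rw [smul_eq_mul, mul_assoc]
        _ = (ε ^ d)⁻¹ • ((ε ^ d) • ∫ z, (fun y : EuclideanSpace ℝ (Fin d) => ρ (ε⁻¹ • y) * γ (x - y)) (ε • z)) := by
            congr 1
            rw [Measure.integral_comp_smul_of_nonneg volume
              (fun y : EuclideanSpace ℝ (Fin d) => ρ (ε⁻¹ • y) * γ (x - y)) ε (hR := hε),
              finrank_euclideanSpace_fin, smul_smul,
              mul_inv_cancel₀ (by positivity : (ε:ℝ) ^ d ≠ 0), one_smul]
        _ = ∫ z, ρ z * γ (x - ε • z) := by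
            rw [smul_smul, inv_mul_cancel₀ (by positivity), one_smul]
            exact integral_congr_ae (Filter.Eventually.of_forall hcs)
  -- Lipschitz-type bound for g
  have hbound : ∀ (ε ε' : ℝ) (x x' : EuclideanSpace ℝ (Fin d)),
      |g ε x - g ε' x'| ≤ L * (|ε - ε'| + ‖x - x'‖) := by
    intro ε ε' x x'
    have hsub : g ε x - g ε' x' = ∫ z, (ρ z * γ (x - ε • z) - ρ z * γ (x' - ε' • z)) :=
      (integral_sub (hint ε x) (hint ε' x')).symm
    rw [hsub]
    have hle : ∀ z : EuclideanSpace ℝ (Fin d), |ρ z * γ (x - ε • z) - ρ z * γ (x' - ε' • z)|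
        ≤ ρ z * (L * (|ε - ε'| + ‖x - x'‖)) := by
      intro z
      rw [← mul_sub, abs_mul, abs_of_nonneg (hρ_nonneg z)]
      rcases eq_or_ne (ρ z) 0 with h | h
      · simp [h]
      · have hz : ‖z‖ ≤ 1 := by
          have := hρ_supp (Function.mem_support.mpr h)
          simpa [Metric.mem_closedBall, dist_eq_norm] using this
        apply mul_le_mul_of_nonneg_left _ (hρ_nonneg z)
        have := hγ_lip.dist_le_mul (x - ε • z) (x' - ε' • z)
        rw [Real.coe_toNNReal _ hL] at this
        rw [← Real.dist_eq]
        refine this.trans ?_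
        rw [dist_eq_norm]
        have : (x - ε • z) - (x' - ε' • z) = (x - x') - (ε - ε') • z := by
          rw [sub_smul]; abel
        rw [this]
        have h1 : ‖(x - x') - (ε - ε') • z‖ ≤ ‖x - x'‖ + |ε - ε'| * ‖z‖ := by
          refine (norm_sub_le _ _).trans ?_
          rw [norm_smul, Real.norm_eq_abs]
        refine (mul_le_mul_of_nonneg_left h1 hL).trans ?_
        have h2 : |ε - ε'| * ‖z‖ ≤ |ε - ε'| :=
          mul_le_of_le_one_right (abs_nonneg _) hz
        nlinarith [norm_nonneg (x - x'), abs_nonneg (ε - ε')]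
    calc |∫ z, (ρ z * γ (x - ε • z) - ρ z * γ (x' - ε' • z))|
        ≤ ∫ z, ρ z * (L * (|ε - ε'| + ‖x - x'‖)) := by
          rw [← Real.norm_eq_abs]
          refine norm_integral_le_of_norm_le ?_ (Filter.Eventually.of_forall ?_)
          · exact (hρ_cont.integrable_of_hasCompactSupport hρ_cpt).mul_const _
          · intro z; simpa [Real.norm_eq_abs] using hle z
      _ = L * (|ε - ε'| + ‖x - x'‖) := by
          rw [integral_mul_const, hρ_int, one_mul]
  have hconv : ∀ (w : EuclideanSpace ℝ (Fin d)) (wseq : ℕ → EuclideanSpace ℝ (Fin d)),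
      Tendsto wseq atTop (nhds w) →
      Tendsto (fun n => g (εseq n) (wseq n)) atTop (nhds (g ε₀ w)) := by
    intro w wseq hw
    rw [tendsto_iff_dist_tendsto_zero]
    have h1 : Tendsto (fun n => |εseq n - ε₀|) atTop (nhds 0) := by
      have := (hεseq_conv.sub (tendsto_const_nhds : Tendsto (fun _ : ℕ => ε₀) atTop (nhds ε₀))).abs
      simpa using this
    have h2 : Tendsto (fun n => ‖wseq n - w‖) atTop (nhds 0) :=
      tendsto_iff_norm_sub_tendsto_zero.mp hw
    have h3 : Tendsto (fun n => L * (|εseq n - ε₀| + ‖wseq n - w‖)) atTop (nhds 0) := by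
      simpa using (h1.add h2).const_mul L
    refine squeeze_zero (fun n => dist_nonneg) (fun n => ?_) h3
    rw [Real.dist_eq]
    exact hbound _ _ _ _
  constructor
  · intro w
    have h := hconv w (fun _ => w) tendsto_const_nhds
    rw [hkey ε₀ hε₀ w]
    exact h.congr fun n => (hkey _ (hεseq_nonneg n) w).symm
  · intro w wseq hw
    have h := hconv w wseq hw
    have h2 : Tendsto (fun n => ((mollify ρ γ (εseq n) (wseq n) : ℝ) : EReal)) atTop
        (nhds ((mollify ρ γ ε₀ w : ℝ) : EReal)) := by
      rw [hkey ε₀ hε₀ w]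
      exact (continuous_coe_real_ereal.tendsto _).comp
        (h.congr fun n => (hkey _ (hεseq_nonneg n) _).symm)
    rw [h2.liminf_eq]
end

section
/- Let (Ω, 𝔉, μ) be a finite measure space, let γ : ℝ^d → [0, ∞) be a nonnegative, convex function which is Lipschitz continuous with constant L ≥ 0, and let Φ(W) := ∫_Ω γ(W(x)) dμ(x) for W ∈ L²(μ; ℝ^d). Then for all W, W* ∈ L²(μ; ℝ^d) the following are equivalent: (a) W* is a subgradient of Φ at W, i.e. ⟪W*, Z − W⟫ ≤ Φ(Z) − Φ(W) for every Z ∈ L²(μ; ℝ^d); (b) for μ-almost every x ∈ Ω, W*(x) ∈ ∂γ(W(x)), i.e. ⟨W*(x), ξ − W(x)⟩ ≤ γ(ξ) − γ(W(x)) for every ξ ∈ ℝ^d. -/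
open Filter MeasureTheory

/-!
The direction (b) ⇒ (a) is integration of the pointwise subgradient inequality at `ξ = Z x`.
For (a) ⇒ (b), testing (a) with `Z` equal to a constant `ξ` on a measurable set `s` and to `W`
off `s` shows that the set integrals of `x ↦ γ ξ - γ (W x) - ⟪W* x, ξ - W x⟫` are all
nonnegative, so this function is a.e. nonnegative. A countable dense set of `ξ` and the
continuity of the inequality in `ξ` then give it for all `ξ` simultaneously, a.e.
Lipschitz continuity of `γ` makes every integral involved finite.
-/

theorem MeasureTheory.MemLp.integrable_inner {Ω E : Type*} [MeasurableSpace Ω] {μ : Measure Ω}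
    [NormedAddCommGroup E] [InnerProductSpace ℝ E] {f g : Ω → E}
    (hf : MemLp f 2 μ) (hg : MemLp g 2 μ) :
    Integrable (fun x => (inner ℝ (f x) (g x) : ℝ)) μ :=
  (L2.integrable_inner (hf.toLp f) (hg.toLp g)).congr <| by
    filter_upwards [hf.coeFn_toLp, hg.coeFn_toLp] with x hfx hgx
    rw [hfx, hgx]

theorem LipschitzWith.integrable_comp {Ω E F : Type*} [MeasurableSpace Ω] {μ : Measure Ω}
    [IsFiniteMeasure μ] [NormedAddCommGroup E] [NormedAddCommGroup F] {K : NNReal} {g : E → F}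
    (hg : LipschitzWith K g) {f : Ω → E} (hf : Integrable f μ) :
    Integrable (fun x => g (f x)) μ := by
  have hg₀ : LipschitzWith K (fun v => g v - g 0) := by
    simpa using hg.sub (LipschitzWith.const (g 0))
  have := (hg₀.comp_memLp (sub_self _) (memLp_one_iff_integrable.mpr hf)).integrable le_rfl
  refine (this.add (integrable_const (g 0))).congr (Eventually.of_forall fun x => ?_)
  simp

theorem ae_forall_of_forall_ae_of_isClosed {Ω E : Type*} [TopologicalSpace E]
    [TopologicalSpace.SeparableSpace E] {l : Filter Ω} [CountableInterFilter l]
    {p : Ω → E → Prop} (hp : ∀ x, IsClosed {ξ | p x ξ}) (h : ∀ ξ, ∀ᶠ x in l, p x ξ) :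
    ∀ᶠ x in l, ∀ ξ, p x ξ := by
  obtain ⟨D, hDc, hDd⟩ := TopologicalSpace.exists_countable_dense E
  filter_upwards [(eventually_countable_ball hDc).mpr fun ξ _ => h ξ] with x hx ξ
  exact closure_minimal (fun ζ hζ => hx ζ hζ) (hp x) (hDd ξ)

section Localization

variable {Ω E : Type*} [MeasurableSpace Ω] {μ : Measure Ω} {h : Ω → E → ℝ} {W : Ω → E}

open scoped Classical in
theorem ae_nonneg_of_forall_integral_piecewise_nonneg (hW : ∀ x, h x (W x) = 0) {ξ : E}
    (hξ : Integrable (fun x => h x ξ) μ)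
    (hnonneg : ∀ s, MeasurableSet s → 0 ≤ ∫ x, h x (s.piecewise (fun _ => ξ) W x) ∂μ) :
    ∀ᵐ x ∂μ, 0 ≤ h x ξ := by
  refine ae_nonneg_of_forall_setIntegral_nonneg hξ fun s hs _ => ?_
  have hpiece : (fun x => h x (s.piecewise (fun _ => ξ) W x)) = s.indicator (fun x => h x ξ) := by
    funext x
    by_cases hx : x ∈ s <;> simp [hx, hW]
  simpa only [hpiece, integral_indicator hs] using hnonneg s hs

open scoped Classical in
theorem ae_forall_nonneg_of_forall_integral_piecewise_nonneg [TopologicalSpace E]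
    [TopologicalSpace.SeparableSpace E] (hcont : ∀ x, Continuous (h x)) (hW : ∀ x, h x (W x) = 0)
    (hint : ∀ ξ, Integrable (fun x => h x ξ) μ)
    (hnonneg : ∀ ξ s, MeasurableSet s → 0 ≤ ∫ x, h x (s.piecewise (fun _ => ξ) W x) ∂μ) :
    ∀ᵐ x ∂μ, ∀ ξ, 0 ≤ h x ξ :=
  ae_forall_of_forall_ae_of_isClosed (fun x => isClosed_le continuous_const (hcont x))
    fun ξ => ae_nonneg_of_forall_integral_piecewise_nonneg hW (hint ξ) (hnonneg ξ)

end Localization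

theorem subdifferential_integral_functional_iff_general
    {d : ℕ} {Ω : Type*} [MeasurableSpace Ω] (μ : Measure Ω) [IsFiniteMeasure μ]
    (γ : EuclideanSpace ℝ (Fin d) → ℝ)
    (L : ℝ) (hγ_lip : LipschitzWith (Real.toNNReal L) γ)
    (W Wstar : Ω → EuclideanSpace ℝ (Fin d))
    (hW : MemLp W 2 μ) (hWstar : MemLp Wstar 2 μ) :
    (∀ Z : Ω → EuclideanSpace ℝ (Fin d), MemLp Z 2 μ →
      ∫ x, (inner ℝ (Wstar x) (Z x - W x) : ℝ) ∂μ ≤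
        (∫ x, γ (Z x) ∂μ) - ∫ x, γ (W x) ∂μ) ↔
    (∀ᵐ x ∂μ, ∀ ξ : EuclideanSpace ℝ (Fin d),
      (inner ℝ (Wstar x) (ξ - W x) : ℝ) ≤ γ ξ - γ (W x)) := by
  classical
  let gap : Ω → EuclideanSpace ℝ (Fin d) → ℝ :=
    fun x z => γ z - γ (W x) - inner ℝ (Wstar x) (z - W x)
  have hγ_int {Z} (hZ : MemLp Z 2 μ) : Integrable (fun x => γ (Z x)) μ :=
    hγ_lip.integrable_comp (hZ.integrable one_le_two)
  have hinner_int {Z} (hZ : MemLp Z 2 μ) :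
      Integrable (fun x => (inner ℝ (Wstar x) (Z x - W x) : ℝ)) μ :=
    hWstar.integrable_inner (hZ.sub hW)
  have hgap_int {Z} (hZ : MemLp Z 2 μ) : Integrable (fun x => gap x (Z x)) μ :=
    ((hγ_int hZ).sub (hγ_int hW)).sub (hinner_int hZ)
  have hgap {Z} (hZ : MemLp Z 2 μ) : ∫ x, gap x (Z x) ∂μ =
      (∫ x, γ (Z x) ∂μ) - (∫ x, γ (W x) ∂μ) - ∫ x, (inner ℝ (Wstar x) (Z x - W x) : ℝ) ∂μ := by
    rw [← integral_sub (hγ_int hZ) (hγ_int hW)]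
    exact integral_sub (f := fun x => γ (Z x) - γ (W x)) ((hγ_int hZ).sub (hγ_int hW))
      (hinner_int hZ)
  constructor
  · intro hsub
    have hZ (ξ) (s : Set Ω) (hs : MeasurableSet s) : MemLp (s.piecewise (fun _ => ξ) W) 2 μ :=
      MemLp.piecewise hs ((memLp_const ξ).restrict s) (hW.restrict sᶜ)
    have hgap_cont (x) : Continuous (gap x) := (hγ_lip.continuous.sub continuous_const).sub
      (continuous_const.inner (continuous_id.sub continuous_const))
    have hae := ae_forall_nonneg_of_forall_integral_piecewise_nonneg (h := gap) (W := W)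
      hgap_cont (fun x => by simp [gap]) (fun ξ => hgap_int (memLp_const ξ))
      fun ξ s hs => by linarith [hgap (hZ ξ s hs), hsub _ (hZ ξ s hs)]
    filter_upwards [hae] with x hx ξ
    linarith [hx ξ]
  · intro hpt Z hZ
    have := integral_nonneg_of_ae (μ := μ) (f := fun x => gap x (Z x)) <|
      hpt.mono fun x hx => sub_nonneg.mpr (hx (Z x))
    linarith [hgap hZ]

/-- Characterization of the subdifferential of the convex integral functional
`Φ(W) := ∫_Ω γ(W(x)) dμ(x)` on `L²(μ; ℝ^d)`: `W*` is a subgradient of `Φ` at `W` if and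
only if `W*(x) ∈ ∂γ(W(x))` for `μ`-almost every `x`. -/
theorem subdifferential_integral_functional_iff
    {d : ℕ} {Ω : Type*} [MeasurableSpace Ω] (μ : Measure Ω) [IsFiniteMeasure μ]
    (γ : EuclideanSpace ℝ (Fin d) → ℝ)
    (hγ_nonneg : ∀ w, 0 ≤ γ w)
    (hγ_convex : ConvexOn ℝ Set.univ γ)
    (L : ℝ) (hL : 0 ≤ L) (hγ_lip : LipschitzWith (Real.toNNReal L) γ)
    (W Wstar : Ω → EuclideanSpace ℝ (Fin d))
    (hW : MemLp W 2 μ) (hWstar : MemLp Wstar 2 μ) :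
    (∀ Z : Ω → EuclideanSpace ℝ (Fin d), MemLp Z 2 μ →
      ∫ x, (inner ℝ (Wstar x) (Z x - W x) : ℝ) ∂μ ≤
        (∫ x, γ (Z x) ∂μ) - ∫ x, γ (W x) ∂μ) ↔
    (∀ᵐ x ∂μ, ∀ ξ : EuclideanSpace ℝ (Fin d),
      (inner ℝ (Wstar x) (ξ - W x) : ℝ) ≤ γ ξ - γ (W x)) :=
  subdifferential_integral_functional_iff_general μ γ L hγ_lip W Wstar hW hWstar
end

section
/- Let (Ω, 𝔉, μ) be a finite measure space, let γ : ℝ^d → [0, ∞) be a nonnegative, convex, Lipschitz continuous function, let ε₀ ≥ 0, and let (εₙ)ₙ ⊂ [0, ∞) with εₙ → ε₀. For ε ≥ 0 define Φ_ε(W) := ∫_Ω γ_ε(W(x)) dμ(x) on L²(μ; ℝ^d). Then Φ_{εₙ} converges to Φ_{ε₀} on L²(μ; ℝ^d) in the sense of Mosco, namely: (M1) for every W ∈ L²(μ; ℝ^d) one has Φ_{εₙ}(W) → Φ_{ε₀}(W) as n → ∞ (so constant sequences are recovery sequences); and (M2) for every W ∈ L²(μ; ℝ^d) and every sequence (Wₙ)ₙ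 ⊂ L²(μ; ℝ^d) converging weakly to W (i.e. ⟪Wₙ, Z⟫ → ⟪W, Z⟫ for every Z ∈ L²(μ; ℝ^d)), one has liminf_{n→∞} Φ_{εₙ}(Wₙ) ≥ Φ_{ε₀}(W). -/
/-!
Substituting `y = ε z` writes the mollification as `γ_ε(x) = ∫ ρ(z) γ(x - ε z) dz`. In this form
`γ_ε` is visibly convex and `L`-Lipschitz, and `|γ_ε - γ_δ| ≤ L |ε - δ|` because `ρ` is a
probability density supported in the unit ball; hence `ε ↦ Φ_ε(W)` is Lipschitz, which gives (M1).

For (M2) fix `δ > ε₀ ≥ 0`. Then `γ_δ` is `C¹` with gradient bounded by `L`, and convexity gives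
`γ_δ(Wₙ) ≥ γ_δ(W) + ⟨∇γ_δ(W), Wₙ - W⟩` pointwise. The field `∇γ_δ(W)` is bounded, hence in `L²`,
so weak convergence kills the linear term after integration and `liminf Φ_δ(Wₙ) ≥ Φ_δ(W)`.
Passing from `δ` to `εₙ` costs at most `L |εₙ - δ| μ(Ω)` on either side; letting `δ ↓ ε₀` ends the
proof.
-/

open Filter MeasureTheory

open Set InnerProductSpace
open scoped NNReal Topology Gradient

theorem ConvexOn.add_fderiv_le {F : Type*} [NormedAddCommGroup F] [NormedSpace ℝ F]
    {h : F → ℝ} (hconv : ConvexOn ℝ univ h) {v : F} (hv : DifferentiableAt ℝ h v) (w : F) :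
    h v + fderiv ℝ h v (w - v) ≤ h w := by
  have hline : ConvexOn ℝ univ (fun t : ℝ => h (AffineMap.lineMap v w t)) := by
    simpa [Function.comp_def] using hconv.comp_affineMap (AffineMap.lineMap v w)
  have hderiv :
      HasDerivAt (fun t : ℝ => h (AffineMap.lineMap v w t)) (fderiv ℝ h v (w - v)) 0 := by
    have hv' : DifferentiableAt ℝ h (AffineMap.lineMap v w (0 : ℝ)) := by simpa using hv
    simpa [Function.comp_def] using
      hv'.hasFDerivAt.comp_hasDerivAt (0 : ℝ) AffineMap.hasDerivAt_lineMap
  have := hline.le_slope_of_hasDerivAt (mem_univ 0) (mem_univ 1) one_pos hderiv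
  simp only [slope_def_field, AffineMap.lineMap_apply_one, AffineMap.lineMap_apply_zero,
    sub_zero, div_one] at this
  linarith

section Gradient

variable {F : Type*} [NormedAddCommGroup F] [InnerProductSpace ℝ F] [CompleteSpace F]
  {h : F → ℝ}

theorem LipschitzWith.norm_gradient_le {K : ℝ≥0} (hlip : LipschitzWith K h) (x : F) :
    ‖∇ h x‖ ≤ K := by
  simpa [gradient] using norm_fderiv_le_of_lipschitz ℝ (x₀ := x) hlip

theorem ContDiff.continuous_gradient (hsmooth : ContDiff ℝ 1 h) : Continuous (∇ h) :=
  (toDual ℝ F).symm.continuous.comp (hsmooth.continuous_fderiv one_ne_zero)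

end Gradient

theorem coe_le_liminf_of_tendsto_of_le {ι : Type*} {l : Filter ι} [l.NeBot] {a b : ι → ℝ}
    {B : ℝ} (hb : Tendsto b l (𝓝 B)) (hba : ∀ i, b i ≤ a i) :
    (B : EReal) ≤ liminf (fun i => (a i : EReal)) l := by
  rw [← (EReal.tendsto_coe.2 hb).liminf_eq]
  exact liminf_le_liminf (Eventually.of_forall fun i => EReal.coe_le_coe_iff.2 (hba i))

section IntegralFunctional

variable {Ω : Type*} [MeasurableSpace Ω] {μ : Measure Ω} [IsFiniteMeasure μ]

theorem LipschitzWith.integrable_comp_s8 {E : Type*} [NormedAddCommGroup E] {h : E → ℝ} {K : ℝ≥0}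
    (hh : LipschitzWith K h) {W : Ω → E} (hW : Integrable W μ) :
    Integrable (fun a => h (W a)) μ := by
  have h0 : Integrable (fun a => h (W a) - h 0) μ :=
    memLp_one_iff_integrable.1 <|
      (hh.sub (LipschitzWith.const (h 0))).comp_memLp (sub_self _) (memLp_one_iff_integrable.2 hW)
  simpa using (integrable_add_const_iff (c := h 0)).2 h0

theorem ConvexOn.integral_comp_add_inner_gradient_le {F : Type*} [NormedAddCommGroup F]
    [InnerProductSpace ℝ F] [CompleteSpace F] {h : F → ℝ} {K : ℝ≥0}
    (hconv : ConvexOn ℝ univ h) (hsmooth : ContDiff ℝ 1 h) (hlip : LipschitzWith K h)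
    {V W : Ω → F} (hV : Integrable V μ) (hW : Integrable W μ) :
    ∫ a, h (W a) ∂μ + (∫ a, inner ℝ (V a) (∇ h (W a)) ∂μ - ∫ a, inner ℝ (W a) (∇ h (W a)) ∂μ)
      ≤ ∫ a, h (V a) ∂μ := by
  have hG := hsmooth.continuous_gradient.comp_aestronglyMeasurable hW.1
  have hinner : ∀ {U : Ω → F}, Integrable U μ →
      Integrable (fun a => inner ℝ (U a) (∇ h (W a))) μ :=
    fun hU => (hU.norm.const_mul K).mono' (hU.1.inner hG) (Eventually.of_forall fun a =>
      (norm_inner_le_norm _ _).trans (by rw [mul_comm]; gcongr; exact hlip.norm_gradient_le _))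
  have hdiff : Integrable (fun a => inner ℝ (V a) (∇ h (W a)) - inner ℝ (W a) (∇ h (W a))) μ :=
    (hinner hV).sub (hinner hW)
  rw [← integral_sub (hinner hV) (hinner hW), ← integral_add (hlip.integrable_comp_s8 hW) hdiff]
  refine integral_mono ((hlip.integrable_comp_s8 hW).add hdiff) (hlip.integrable_comp_s8 hV)
    fun a => ?_
  have := hconv.add_fderiv_le ((hsmooth.differentiable one_ne_zero) (W a)) (V a)
  rwa [← inner_gradient_left, real_inner_comm, inner_sub_left] at this

theorem lipschitzWith_integral_comp {E : Type*} [NormedAddCommGroup E] {f : ℝ → E → ℝ}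
    {K : ℝ≥0} (hf_lip : ∀ ε, LipschitzWith K (f ε))
    (hf_param : ∀ ε δ x, |f ε x - f δ x| ≤ K * |ε - δ|) {W : Ω → E} (hW : Integrable W μ) :
    LipschitzWith (K * (μ univ).toNNReal) (fun ε => ∫ a, f ε (W a) ∂μ) := by
  refine LipschitzWith.of_dist_le_mul fun ε δ => ?_
  rw [Real.dist_eq, Real.dist_eq, ← integral_sub ((hf_lip ε).integrable_comp_s8 hW)
    ((hf_lip δ).integrable_comp_s8 hW), NNReal.coe_mul, ENNReal.coe_toNNReal_eq_toReal,
    mul_right_comm, ← Real.norm_eq_abs]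
  exact norm_integral_le_of_norm_le_const (Eventually.of_forall fun a => hf_param ε δ (W a))

section WeakLimit

variable {F : Type*} [NormedAddCommGroup F] [InnerProductSpace ℝ F] [CompleteSpace F]
  {f : ℝ → F → ℝ} {K : ℝ≥0} {ε₀ : ℝ} {εseq : ℕ → ℝ} {W : Ω → F} {Wseq : ℕ → Ω → F}

theorem integral_comp_sub_le_liminf_of_weak_tendsto (hf_lip : ∀ ε, LipschitzWith K (f ε))
    (hf_param : ∀ ε δ x, |f ε x - f δ x| ≤ K * |ε - δ|) {δ : ℝ} (hconv : ConvexOn ℝ univ (f δ))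
    (hsmooth : ContDiff ℝ 1 (f δ)) (hεseq : Tendsto εseq atTop (𝓝 ε₀))
    (hW : MemLp W 2 μ) (hWseq : ∀ n, MemLp (Wseq n) 2 μ)
    (hweak : ∀ Z : Ω → F, MemLp Z 2 μ → Tendsto (fun n => ∫ a, inner ℝ (Wseq n a) (Z a) ∂μ)
      atTop (𝓝 (∫ a, inner ℝ (W a) (Z a) ∂μ))) :
    ((∫ a, f δ (W a) ∂μ - (K * (μ univ).toNNReal : ℝ≥0) * |ε₀ - δ| : ℝ) : EReal) ≤
      liminf (fun n => ((∫ a, f (εseq n) (Wseq n a) ∂μ : ℝ) : EReal)) atTop := by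
  set C : ℝ≥0 := K * (μ univ).toNNReal
  set G : Ω → F := fun a => ∇ (f δ) (W a)
  have hG : MemLp G 2 μ :=
    MemLp.of_bound (hsmooth.continuous_gradient.comp_aestronglyMeasurable hW.1) K
      (Eventually.of_forall fun a => (hf_lip δ).norm_gradient_le (W a))
  refine coe_le_liminf_of_tendsto_of_le (b := fun n => ∫ a, f δ (W a) ∂μ +
    (∫ a, inner ℝ (Wseq n a) (G a) ∂μ - ∫ a, inner ℝ (W a) (G a) ∂μ) - C * |εseq n - δ|) ?_ ?_
  · have hpairing := (hweak G hG).sub_const (∫ a, inner ℝ (W a) (G a) ∂μ)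
    have hdist := ((hεseq.sub_const δ).abs).const_mul (C : ℝ)
    simpa using (hpairing.const_add (∫ a, f δ (W a) ∂μ)).sub hdist
  · intro n
    have htangent : ∫ a, f δ (W a) ∂μ +
        (∫ a, inner ℝ (Wseq n a) (G a) ∂μ - ∫ a, inner ℝ (W a) (G a) ∂μ) ≤
          ∫ a, f δ (Wseq n a) ∂μ :=
      hconv.integral_comp_add_inner_gradient_le hsmooth (hf_lip δ)
        ((hWseq n).integrable one_le_two) (hW.integrable one_le_two)
    have hparam := (lipschitzWith_integral_comp (μ := μ) hf_lip hf_param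
      ((hWseq n).integrable one_le_two)).dist_le_mul (εseq n) δ
    rw [Real.dist_eq, Real.dist_eq] at hparam
    linarith [(abs_le.1 hparam).1]

theorem le_liminf_integral_comp_of_weak_tendsto (hf_lip : ∀ ε, LipschitzWith K (f ε))
    (hf_param : ∀ ε δ x, |f ε x - f δ x| ≤ K * |ε - δ|)
    (hf_convex : ∀ δ > ε₀, ConvexOn ℝ univ (f δ)) (hf_smooth : ∀ δ > ε₀, ContDiff ℝ 1 (f δ))
    (hεseq : Tendsto εseq atTop (𝓝 ε₀)) (hW : MemLp W 2 μ) (hWseq : ∀ n, MemLp (Wseq n) 2 μ)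
    (hweak : ∀ Z : Ω → F, MemLp Z 2 μ → Tendsto (fun n => ∫ a, inner ℝ (Wseq n a) (Z a) ∂μ)
      atTop (𝓝 (∫ a, inner ℝ (W a) (Z a) ∂μ))) :
    ((∫ a, f ε₀ (W a) ∂μ : ℝ) : EReal) ≤
      liminf (fun n => ((∫ a, f (εseq n) (Wseq n a) ∂μ : ℝ) : EReal)) atTop := by
  set C : ℝ≥0 := K * (μ univ).toNNReal
  have hcont : Continuous fun δ => ∫ a, f δ (W a) ∂μ - C * |ε₀ - δ| :=
    (lipschitzWith_integral_comp hf_lip hf_param (hW.integrable one_le_two)).continuous.sub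
      (by fun_prop)
  have hlim : Tendsto (fun δ => ∫ a, f δ (W a) ∂μ - C * |ε₀ - δ|) (𝓝[>] ε₀)
      (𝓝 (∫ a, f ε₀ (W a) ∂μ)) := by
    simpa using (hcont.tendsto ε₀).mono_left nhdsWithin_le_nhds
  refine le_of_tendsto (EReal.tendsto_coe.2 hlim) (eventually_nhdsWithin_of_forall fun δ hδ => ?_)
  exact integral_comp_sub_le_liminf_of_weak_tendsto hf_lip hf_param (hf_convex δ hδ)
    (hf_smooth δ hδ) hεseq hW hWseq hweak

end WeakLimit

end IntegralFunctional

theorem abs_integral_mul_sub_integral_mul_le {E : Type*} [MeasurableSpace E] {ν : Measure E}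
    {ρ f g : E → ℝ} {C : ℝ} (hρ_nonneg : ∀ z, 0 ≤ ρ z) (hρ_int : ∫ z, ρ z ∂ν = 1)
    (hρ : Integrable ρ ν) (hf : Integrable (fun z => ρ z * f z) ν)
    (hg : Integrable (fun z => ρ z * g z) ν) (hfg : ∀ z ∈ Function.support ρ, |f z - g z| ≤ C) :
    |∫ z, ρ z * f z ∂ν - ∫ z, ρ z * g z ∂ν| ≤ C := by
  rw [← integral_sub hf hg, ← Real.norm_eq_abs]
  calc ‖∫ z, (ρ z * f z - ρ z * g z) ∂ν‖ ≤ ∫ z, ρ z * C ∂ν := by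
        refine norm_integral_le_of_norm_le (hρ.mul_const C) (Eventually.of_forall fun z => ?_)
        rw [← mul_sub, norm_mul, Real.norm_of_nonneg (hρ_nonneg z), Real.norm_eq_abs]
        by_cases hz : ρ z = 0
        · simp [hz]
        · exact mul_le_mul_of_nonneg_left (hfg z hz) (hρ_nonneg z)
    _ = C := by rw [integral_mul_const, hρ_int, one_mul]

/-- `ρ_ε * γ` after the substitution `y = ε z`; unlike `mollify` it needs no case split at
`ε = 0`. -/
noncomputable def mollifyAvg {E : Type*} [NormedAddCommGroup E] [NormedSpace ℝ E]
    [MeasurableSpace E] (ν : Measure E) (ρ γ : E → ℝ) (ε : ℝ) (x : E) : ℝ :=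
  ∫ z, ρ z * γ (x - ε • z) ∂ν

section Mollifier

variable {E : Type*} [NormedAddCommGroup E] [NormedSpace ℝ E] [MeasurableSpace E]
  {ν : Measure E} {ρ γ : E → ℝ} {K : ℝ≥0}

theorem mollifyAvg_zero (hρ_int : ∫ z, ρ z ∂ν = 1) : mollifyAvg ν ρ γ 0 = γ := by
  ext x
  simp [mollifyAvg, integral_mul_const, hρ_int]

variable [BorelSpace E] [IsFiniteMeasureOnCompacts ν]

theorem integrable_mul_comp_sub_smul (hρ : Continuous ρ) (hρ_cpt : HasCompactSupport ρ)
    (hγ : Continuous γ) (ε : ℝ) (x : E) : Integrable (fun z => ρ z * γ (x - ε • z)) ν :=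
  (hρ.mul (hγ.comp (by fun_prop))).integrable_of_hasCompactSupport hρ_cpt.mul_right

theorem lipschitzWith_mollifyAvg (hρ : Continuous ρ) (hρ_cpt : HasCompactSupport ρ)
    (hρ_nonneg : ∀ z, 0 ≤ ρ z) (hρ_int : ∫ z, ρ z ∂ν = 1) (hγ : LipschitzWith K γ) (ε : ℝ) :
    LipschitzWith K (mollifyAvg ν ρ γ ε) := by
  refine LipschitzWith.of_dist_le_mul fun x y => ?_
  have hint := integrable_mul_comp_sub_smul (ν := ν) hρ hρ_cpt hγ.continuous ε
  refine abs_integral_mul_sub_integral_mul_le hρ_nonneg hρ_int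
    (hρ.integrable_of_hasCompactSupport hρ_cpt) (hint x) (hint y) fun z _ => ?_
  simpa only [Real.dist_eq, dist_sub_right] using hγ.dist_le_mul (x - ε • z) (y - ε • z)

theorem abs_mollifyAvg_sub_mollifyAvg_le (hρ : Continuous ρ) (hρ_cpt : HasCompactSupport ρ)
    (hρ_nonneg : ∀ z, 0 ≤ ρ z) (hρ_supp : Function.support ρ ⊆ Metric.closedBall 0 1)
    (hρ_int : ∫ z, ρ z ∂ν = 1) (hγ : LipschitzWith K γ) (ε δ : ℝ) (x : E) :
    |mollifyAvg ν ρ γ ε x - mollifyAvg ν ρ γ δ x| ≤ K * |ε - δ| := by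
  have hint := integrable_mul_comp_sub_smul (ν := ν) hρ hρ_cpt hγ.continuous
  refine abs_integral_mul_sub_integral_mul_le hρ_nonneg hρ_int
    (hρ.integrable_of_hasCompactSupport hρ_cpt) (hint ε x) (hint δ x) fun z hz => ?_
  have hz1 : ‖z‖ ≤ 1 := by simpa using hρ_supp hz
  calc |γ (x - ε • z) - γ (x - δ • z)| ≤ K * ‖(δ - ε) • z‖ := by
        simpa [dist_eq_norm, ← sub_smul] using hγ.dist_le_mul (x - ε • z) (x - δ • z)
    _ ≤ K * |ε - δ| := by
        rw [norm_smul, Real.norm_eq_abs, abs_sub_comm]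
        gcongr
        exact mul_le_of_le_one_right (abs_nonneg _) hz1

theorem convexOn_mollifyAvg (hρ : Continuous ρ) (hρ_cpt : HasCompactSupport ρ)
    (hρ_nonneg : ∀ z, 0 ≤ ρ z) (hγ_convex : ConvexOn ℝ univ γ) (hγ : Continuous γ) (ε : ℝ) :
    ConvexOn ℝ univ (mollifyAvg ν ρ γ ε) := by
  refine ⟨convex_univ, fun x _ y _ a b ha hb hab => ?_⟩
  have hint := integrable_mul_comp_sub_smul (ν := ν) hρ hρ_cpt hγ ε
  have hpoint : ∀ z, ρ z * γ ((a • x + b • y) - ε • z)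
      ≤ a * (ρ z * γ (x - ε • z)) + b * (ρ z * γ (y - ε • z)) := fun z => by
    have hsplit : (a • x + b • y) - ε • z = a • (x - ε • z) + b • (y - ε • z) := by
      calc (a • x + b • y) - ε • z = a • x + b • y - (a + b) • ε • z := by rw [hab, one_smul]
        _ = a • (x - ε • z) + b • (y - ε • z) := by module
    have := mul_le_mul_of_nonneg_left
      (hγ_convex.2 (mem_univ (x - ε • z)) (mem_univ (y - ε • z)) ha hb hab) (hρ_nonneg z)
    rw [hsplit]
    simp only [smul_eq_mul] at this
    linear_combination this
  calc mollifyAvg ν ρ γ ε (a • x + b • y)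
      ≤ ∫ z, (a * (ρ z * γ (x - ε • z)) + b * (ρ z * γ (y - ε • z))) ∂ν :=
        integral_mono (hint _) (((hint x).const_mul a).add ((hint y).const_mul b)) hpoint
    _ = a • mollifyAvg ν ρ γ ε x + b • mollifyAvg ν ρ γ ε y := by
        rw [integral_add ((hint x).const_mul a) ((hint y).const_mul b), integral_const_mul,
          integral_const_mul]
        rfl

end Mollifier

section Rescaling

variable {E : Type*} [NormedAddCommGroup E] [NormedSpace ℝ E] [FiniteDimensional ℝ E]
  [MeasurableSpace E] [BorelSpace E] {ν : Measure E} [ν.IsAddHaarMeasure] {ρ γ : E → ℝ}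

theorem mollifyAvg_eq_integral_rescaled {ε : ℝ} (hε : 0 < ε) (x : E) :
    mollifyAvg ν ρ γ ε x =
      ∫ y, (ε ^ Module.finrank ℝ E)⁻¹ * ρ (ε⁻¹ • y) * γ (x - y) ∂ν := by
  have hscale := Measure.integral_comp_inv_smul ν (fun z => ρ z * γ (x - ε • z)) ε
  simp only [smul_smul, mul_inv_cancel₀ hε.ne', one_smul] at hscale
  rw [abs_of_pos (by positivity), ← inv_smul_eq_iff₀ (by positivity), smul_eq_mul] at hscale
  rw [mollifyAvg, ← hscale, ← integral_const_mul]
  simp only [mul_assoc]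

theorem contDiff_mollifyAvg (hρ : ContDiff ℝ 1 ρ) (hρ_cpt : HasCompactSupport ρ) (hγ : Continuous γ)
    {δ : ℝ} (hδ : 0 < δ) : ContDiff ℝ 1 (mollifyAvg ν ρ γ δ) := by
  have hρδ : ContDiff ℝ 1 fun y => (δ ^ Module.finrank ℝ E)⁻¹ * ρ (δ⁻¹ • y) := by fun_prop
  have hρδ_cpt : HasCompactSupport fun y => (δ ^ Module.finrank ℝ E)⁻¹ * ρ (δ⁻¹ • y) :=
    (hρ_cpt.comp_smul (inv_ne_zero hδ.ne')).mul_left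
  have hconv : mollifyAvg ν ρ γ δ = convolution (fun y => (δ ^ Module.finrank ℝ E)⁻¹ * ρ (δ⁻¹ • y))
      γ (ContinuousLinearMap.mul ℝ ℝ) ν := by
    ext x
    simp [mollifyAvg_eq_integral_rescaled hδ, convolution]
  rw [hconv]
  exact hρδ_cpt.contDiff_convolution_left _ hρδ hγ.locallyIntegrable

end Rescaling

theorem mollify_eq_mollifyAvg {d : ℕ} {ρ γ : EuclideanSpace ℝ (Fin d) → ℝ}
    (hρ_int : ∫ z, ρ z = 1) {ε : ℝ} (hε : 0 ≤ ε) : mollify ρ γ ε = mollifyAvg volume ρ γ ε := by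
  ext x
  rcases hε.eq_or_lt with rfl | hε
  · simp [mollify, mollifyAvg_zero hρ_int]
  · rw [mollify, if_neg hε.ne', mollifyAvg_eq_integral_rescaled hε, finrank_euclideanSpace_fin]

theorem mollify_integral_functional_mosco_general
    {d : ℕ}
    (ρ : EuclideanSpace ℝ (Fin d) → ℝ)
    (hρ_smooth : ContDiff ℝ (⊤ : ℕ∞) ρ) (hρ_cpt : HasCompactSupport ρ)
    (hρ_nonneg : ∀ x, 0 ≤ ρ x)
    (hρ_supp : Function.support ρ ⊆ Metric.closedBall 0 1)
    (hρ_int : ∫ x, ρ x = 1)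
    (γ : EuclideanSpace ℝ (Fin d) → ℝ)
    (hγ_convex : ConvexOn ℝ Set.univ γ)
    (L : ℝ) (hγ_lip : LipschitzWith (Real.toNNReal L) γ)
    {Ω : Type*} [MeasurableSpace Ω] (μ : Measure Ω) [IsFiniteMeasure μ]
    (ε₀ : ℝ) (hε₀ : 0 ≤ ε₀)
    (εseq : ℕ → ℝ) (hεseq_nonneg : ∀ n, 0 ≤ εseq n)
    (hεseq_conv : Filter.Tendsto εseq Filter.atTop (nhds ε₀)) :
    (∀ W : Ω → EuclideanSpace ℝ (Fin d), MemLp W 2 μ →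
      Filter.Tendsto (fun n => ∫ x, mollify ρ γ (εseq n) (W x) ∂μ) Filter.atTop
        (nhds (∫ x, mollify ρ γ ε₀ (W x) ∂μ))) ∧
    (∀ W : Ω → EuclideanSpace ℝ (Fin d), MemLp W 2 μ →
      ∀ Wseq : ℕ → Ω → EuclideanSpace ℝ (Fin d), (∀ n, MemLp (Wseq n) 2 μ) →
      (∀ Z : Ω → EuclideanSpace ℝ (Fin d), MemLp Z 2 μ →
        Filter.Tendsto (fun n => ∫ x, (inner ℝ (Wseq n x) (Z x) : ℝ) ∂μ) Filter.atTop
          (nhds (∫ x, (inner ℝ (W x) (Z x) : ℝ) ∂μ))) →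
      ((∫ x, mollify ρ γ ε₀ (W x) ∂μ : ℝ) : EReal) ≤
        Filter.liminf
          (fun n => ((∫ x, mollify ρ γ (εseq n) (Wseq n x) ∂μ : ℝ) : EReal))
          Filter.atTop) := by
  have hρ := hρ_smooth.continuous
  have hlip : ∀ ε, LipschitzWith L.toNNReal (mollifyAvg volume ρ γ ε) :=
    lipschitzWith_mollifyAvg hρ hρ_cpt hρ_nonneg hρ_int hγ_lip
  have hparam := abs_mollifyAvg_sub_mollifyAvg_le hρ hρ_cpt hρ_nonneg hρ_supp hρ_int hγ_lip
  simp only [mollify_eq_mollifyAvg hρ_int hε₀, mollify_eq_mollifyAvg hρ_int (hεseq_nonneg _)]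
  refine ⟨fun W hW => ?_, fun W hW Wseq hWseq hweak => ?_⟩
  · exact ((lipschitzWith_integral_comp hlip hparam (hW.integrable one_le_two)).continuous.tendsto
      ε₀).comp hεseq_conv
  · exact le_liminf_integral_comp_of_weak_tendsto hlip hparam
      (fun δ _ => convexOn_mollifyAvg hρ hρ_cpt hρ_nonneg hγ_convex hγ_lip.continuous δ)
      (fun δ hδ => contDiff_mollifyAvg (hρ_smooth.of_le (by exact_mod_cast le_top)) hρ_cpt
        hγ_lip.continuous (hε₀.trans_lt hδ))
      hεseq_conv hW hWseq hweak

/-- Mosco convergence of the integral functionals `Φ_ε(W) := ∫_Ω γ_ε(W(x)) dμ(x)` on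
`L²(μ; ℝ^d)` as `εₙ → ε₀`: (M1) `Φ_{εₙ}(W) → Φ_{ε₀}(W)` for every `W ∈ L²`, and
(M2) whenever `Wₙ ⇀ W` weakly in `L²(μ; ℝ^d)` one has
`liminf_n Φ_{εₙ}(Wₙ) ≥ Φ_{ε₀}(W)` (liminf in the extended reals). -/
theorem mollify_integral_functional_mosco
    {d : ℕ} (hd : 1 ≤ d)
    (ρ : EuclideanSpace ℝ (Fin d) → ℝ)
    (hρ_smooth : ContDiff ℝ (⊤ : ℕ∞) ρ) (hρ_cpt : HasCompactSupport ρ)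
    (hρ_nonneg : ∀ x, 0 ≤ ρ x)
    (hρ_supp : Function.support ρ ⊆ Metric.closedBall 0 1)
    (hρ_int : ∫ x, ρ x = 1)
    (γ : EuclideanSpace ℝ (Fin d) → ℝ)
    (hγ_nonneg : ∀ x, 0 ≤ γ x)
    (hγ_convex : ConvexOn ℝ Set.univ γ)
    (L : ℝ) (hL : 0 ≤ L) (hγ_lip : LipschitzWith (Real.toNNReal L) γ)
    {Ω : Type*} [MeasurableSpace Ω] (μ : Measure Ω) [IsFiniteMeasure μ]
    (ε₀ : ℝ) (hε₀ : 0 ≤ ε₀)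
    (εseq : ℕ → ℝ) (hεseq_nonneg : ∀ n, 0 ≤ εseq n)
    (hεseq_conv : Filter.Tendsto εseq Filter.atTop (nhds ε₀)) :
    (∀ W : Ω → EuclideanSpace ℝ (Fin d), MemLp W 2 μ →
      Filter.Tendsto (fun n => ∫ x, mollify ρ γ (εseq n) (W x) ∂μ) Filter.atTop
        (nhds (∫ x, mollify ρ γ ε₀ (W x) ∂μ))) ∧
    (∀ W : Ω → EuclideanSpace ℝ (Fin d), MemLp W 2 μ →
      ∀ Wseq : ℕ → Ω → EuclideanSpace ℝ (Fin d), (∀ n, MemLp (Wseq n) 2 μ) →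
      (∀ Z : Ω → EuclideanSpace ℝ (Fin d), MemLp Z 2 μ →
        Filter.Tendsto (fun n => ∫ x, (inner ℝ (Wseq n x) (Z x) : ℝ) ∂μ) Filter.atTop
          (nhds (∫ x, (inner ℝ (W x) (Z x) : ℝ) ∂μ))) →
      ((∫ x, mollify ρ γ ε₀ (W x) ∂μ : ℝ) : EReal) ≤
        Filter.liminf
          (fun n => ((∫ x, mollify ρ γ (εseq n) (Wseq n x) ∂μ : ℝ) : EReal))
          Filter.atTop) :=
  mollify_integral_functional_mosco_general ρ hρ_smooth hρ_cpt hρ_nonneg hρ_supp hρ_int γ hγ_convex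
    L hγ_lip μ ε₀ hε₀ εseq hεseq_nonneg hεseq_conv
end
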